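/- There exist multi-indices α, β ∈ ℕⁿ and a constant C > 0, depending only on n and φ (in particular independent of δ, k and Υ), such that for every integer k ≥ 0 and every Υ ∈ S_{α,β}(ℝⁿ) one has ∫_{ℝⁿ} |η₀^k(x)| dx ≤ C. -/

import Mathlib

/-!
By Young's inequality `‖f ⋆ g‖₁ ≤ ‖f‖₁ ‖g‖₁` it suffices to bound the `L¹` norms of the three
factors, and the anisotropic scaling `g ↦ g_I` preserves `L¹` norms. Fourier inversion identifies
`Ψ₀ + Ψ₁` with the dilate `φ_{δ^ε}` and `Φ_k` (for `k ≥ 1`) with a difference of two dilates of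
`φ`, so their `L¹` norms are at most `‖φ‖₁` and `2 ‖φ‖₁`. Finally, the bounds `|x^{α'} Υ(x)| ≤ 1`
for `α' ≤ (2, …, 2)` give `|Υ(x)| ≤ 2ⁿ ∏ᵢ (1 + xᵢ²)⁻¹`, which is integrable.
-/

open MeasureTheory SchwartzMap Real Filter
open scoped FourierTransform Convolution Topology

noncomputable section

/-- The anisotropic scaling `x ↦ (x₁/δ, …, x_{n−1}/δ, x_n)`. -/
def scaleI (n : ℕ) (δ : ℝ) (x : EuclideanSpace ℝ (Fin n)) : EuclideanSpace ℝ (Fin n) :=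
  WithLp.toLp 2 (fun i : Fin n => if (i : ℕ) < n - 1 then x i / δ else x i)

/-- `g_I(x) = δ^{−(n−1)} g(x₁/δ, …, x_{n−1}/δ, x_n)`. -/
def funI (n : ℕ) (δ : ℝ) (g : EuclideanSpace ℝ (Fin n) → ℂ) :
    EuclideanSpace ℝ (Fin n) → ℂ :=
  fun x => ((δ ^ (n - 1) : ℝ))⁻¹ • g (scaleI n δ x)

/-- Partial derivative in the `i`-th coordinate direction. -/
def pderivI (n : ℕ) (i : Fin n) (f : EuclideanSpace ℝ (Fin n) → ℂ) :
    EuclideanSpace ℝ (Fin n) → ℂ :=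
  fun x => fderiv ℝ f x (EuclideanSpace.single i 1)

/-- Multi-index partial derivative `∂^β`. -/
def mderiv (n : ℕ) (β : Fin n → ℕ) (f : EuclideanSpace ℝ (Fin n) → ℂ) :
    EuclideanSpace ℝ (Fin n) → ℂ :=
  (List.finRange n).foldr (fun i g => (pderivI n i)^[β i] g) f

/-- `Υ ∈ S_{α,β}(ℝⁿ)`. -/
def memS (n : ℕ) (α β : Fin n → ℕ)
    (Υ : SchwartzMap (EuclideanSpace ℝ (Fin n)) ℂ) : Prop :=
  ∀ α' β' : Fin n → ℕ, (∑ i, α' i) ≤ (∑ i, α i) → (∑ i, β' i) ≤ (∑ i, β i) →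
    ∀ x : EuclideanSpace ℝ (Fin n),
      ‖(∏ i, (x i) ^ (α' i)) • mderiv n β' (⇑Υ) x‖ ≤ 1

section NormBounds

variable {α E : Type*} [MeasurableSpace α] {μ : Measure α} [NormedAddCommGroup E]

theorem MeasureTheory.integral_norm_sub_le {f g : α → E} (hf : Integrable f μ)
    (hg : Integrable g μ) :
    ∫ x, ‖(f - g) x‖ ∂μ ≤ (∫ x, ‖f x‖ ∂μ) + ∫ x, ‖g x‖ ∂μ := by
  rw [← integral_add hf.norm hg.norm]
  exact integral_mono (hf.sub hg).norm (hf.norm.add hg.norm) fun x => norm_sub_le _ _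

end NormBounds

section Young

variable {G : Type*} [AddGroup G] [MeasurableSpace G] [MeasurableAdd₂ G] [MeasurableNeg G]
  {μ : Measure G} [SFinite μ] [μ.IsAddRightInvariant]

theorem MeasureTheory.integral_norm_convolution_le {f g : G → ℂ} (hf : Integrable f μ)
    (hg : Integrable g μ) :
    ∫ x, ‖(f ⋆[ContinuousLinearMap.mul ℝ ℂ, μ] g) x‖ ∂μ ≤
      (∫ x, ‖f x‖ ∂μ) * ∫ x, ‖g x‖ ∂μ := by
  have hpointwise : ∀ x, ‖(f ⋆[ContinuousLinearMap.mul ℝ ℂ, μ] g) x‖ ≤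
      ((fun x => ‖f x‖) ⋆[ContinuousLinearMap.mul ℝ ℝ, μ] fun x => ‖g x‖) x := fun x =>
    (norm_integral_le_integral_norm _).trans_eq (by simp [convolution_def])
  calc ∫ x, ‖(f ⋆[ContinuousLinearMap.mul ℝ ℂ, μ] g) x‖ ∂μ
      ≤ ∫ x, ((fun x => ‖f x‖) ⋆[ContinuousLinearMap.mul ℝ ℝ, μ] fun x => ‖g x‖) x ∂μ :=
        integral_mono_of_nonneg (.of_forall fun _ => norm_nonneg _)
          (hf.norm.integrable_convolution _ hg.norm) (.of_forall hpointwise)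
    _ = (∫ x, ‖f x‖ ∂μ) * ∫ x, ‖g x‖ ∂μ := integral_convolution _ hf.norm hg.norm

end Young

section Dilation

variable {V : Type*} [NormedAddCommGroup V] [InnerProductSpace ℝ V]

/-- The paper's `g_t`. -/
def dilation (a : ℝ) (f : V → ℂ) : V → ℂ :=
  fun x => (a ^ Module.finrank ℝ V)⁻¹ • f (a⁻¹ • x)

@[simp]
theorem dilation_one (f : V → ℂ) : dilation 1 f = f := by
  ext x; simp [dilation]

theorem Continuous.dilation {f : V → ℂ} (hf : Continuous f) (a : ℝ) :
    Continuous (dilation a f) := by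
  unfold _root_.dilation; fun_prop

variable [FiniteDimensional ℝ V] [MeasurableSpace V] [BorelSpace V]

theorem MeasureTheory.Integrable.dilation {f : V → ℂ} (hf : Integrable f) {a : ℝ} (ha : a ≠ 0) :
    Integrable (dilation a f) :=
  (hf.comp_smul (inv_ne_zero ha)).smul (a ^ Module.finrank ℝ V)⁻¹

theorem integral_norm_dilation {a : ℝ} (ha : 0 < a) (f : V → ℂ) :
    ∫ x, ‖dilation a f x‖ = ∫ x, ‖f x‖ := by
  have hpow : 0 < a ^ Module.finrank ℝ V := by positivity
  simp only [dilation, norm_smul, Real.norm_eq_abs, abs_inv, abs_of_pos hpow]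
  rw [integral_const_mul, Measure.integral_comp_inv_smul_of_nonneg volume (fun x => ‖f x‖) ha.le, smul_eq_mul,
    inv_mul_cancel_left₀ hpow.ne']

theorem fourier_dilation {a : ℝ} (ha : 0 < a) (f : V → ℂ) (ξ : V) :
    𝓕 (dilation a f) ξ = 𝓕 f (a • ξ) := by
  have hpow : a ^ Module.finrank ℝ V ≠ 0 := by positivity
  have hintegrand : ∀ v, 𝐞 (-inner ℝ v ξ) • dilation a f v =
      (a ^ Module.finrank ℝ V)⁻¹ • (fun w => 𝐞 (-inner ℝ w (a • ξ)) • f w) (a⁻¹ • v) := by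
    intro v
    simp only [dilation, smul_comm _ (a ^ Module.finrank ℝ V)⁻¹, real_inner_smul_left,
      real_inner_smul_right, mul_inv_cancel_left₀ ha.ne']
  rw [Real.fourier_eq, Real.fourier_eq, integral_congr_ae (.of_forall hintegrand), integral_smul,
    Measure.integral_comp_inv_smul_of_nonneg volume (fun w => 𝐞 (-inner ℝ w (a • ξ)) • f w) ha.le,
    smul_smul, inv_mul_cancel₀ hpow, one_smul]

end Dilation

section FourierUniqueness

variable {V : Type*} [NormedAddCommGroup V] [InnerProductSpace ℝ V] [FiniteDimensional ℝ V]
  [MeasurableSpace V] [BorelSpace V]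

theorem Real.fourier_sub {f g : V → ℂ} (hf : Integrable f) (hg : Integrable g) (ξ : V) :
    𝓕 (f - g) ξ = 𝓕 f ξ - 𝓕 g ξ := by
  simp only [Real.fourier_eq, Pi.sub_apply, smul_sub]
  exact integral_sub ((Real.fourierIntegral_convergent_iff ξ).2 hf)
    ((Real.fourierIntegral_convergent_iff ξ).2 hg)

namespace SchwartzMap

theorem coe_eq_of_fourier_eq (f : 𝓢(V, ℂ)) {g : V → ℂ} (hg : Continuous g) (hgi : Integrable g)
    (h : ∀ ξ, 𝓕 ⇑f ξ = 𝓕 g ξ) : ⇑f = g := by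
  have hF : 𝓕 ⇑f = 𝓕 g := funext h
  have hFi : Integrable (𝓕 ⇑f) := (𝓕 f).integrable
  rw [← f.continuous.fourierInv_fourier_eq f.integrable hFi, hF,
    hg.fourierInv_fourier_eq hgi (hF ▸ hFi)]

theorem coe_eq_dilation_sub_dilation {f φ : 𝓢(V, ℂ)} {a b : ℝ} (ha : 0 < a) (hb : 0 < b)
    (h : ∀ ξ, 𝓕 ⇑f ξ = 𝓕 ⇑φ (a • ξ) - 𝓕 ⇑φ (b • ξ)) :
    ⇑f = dilation a φ - dilation b φ := by
  have hai := φ.integrable.dilation ha.ne'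
  have hbi := φ.integrable.dilation hb.ne'
  refine f.coe_eq_of_fourier_eq ((φ.continuous.dilation a).sub (φ.continuous.dilation b))
    (hai.sub hbi) fun ξ => ?_
  rw [h, Real.fourier_sub hai hbi, fourier_dilation ha, fourier_dilation hb]

theorem integral_norm_le_of_fourier_eq_sub {f φ : 𝓢(V, ℂ)} {a b : ℝ} (ha : 0 < a) (hb : 0 < b)
    (h : ∀ ξ, 𝓕 ⇑f ξ = 𝓕 ⇑φ (a • ξ) - 𝓕 ⇑φ (b • ξ)) :
    ∫ x, ‖f x‖ ≤ 2 * ∫ x, ‖φ x‖ := by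
  calc ∫ x, ‖f x‖ = ∫ x, ‖(dilation a φ - dilation b φ) x‖ := by
        rw [coe_eq_dilation_sub_dilation ha hb h]
    _ ≤ (∫ x, ‖dilation a φ x‖) + ∫ x, ‖dilation b φ x‖ :=
        integral_norm_sub_le (φ.integrable.dilation ha.ne') (φ.integrable.dilation hb.ne')
    _ = 2 * ∫ x, ‖φ x‖ := by rw [integral_norm_dilation ha, integral_norm_dilation hb, two_mul]

theorem coe_add_eq_dilation {φ Ψ₀ Ψ₁ : 𝓢(V, ℂ)} {a : ℝ} (ha : 0 < a)
    (h₀ : ∀ ξ, 𝓕 ⇑Ψ₀ ξ = 𝓕 ⇑φ ξ) (h₁ : ∀ ξ, 𝓕 ⇑Ψ₁ ξ = 𝓕 ⇑φ (a • ξ) - 𝓕 ⇑φ ξ) :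
    ⇑Ψ₀ + ⇑Ψ₁ = dilation a φ := by
  rw [Ψ₀.coe_eq_of_fourier_eq φ.continuous φ.integrable h₀,
    coe_eq_dilation_sub_dilation (f := Ψ₁) ha one_pos (by simpa only [one_smul] using h₁), dilation_one,
    add_sub_cancel]

end SchwartzMap

end FourierUniqueness

section LinearChangeOfVariables

variable {E F : Type*} [NormedAddCommGroup E] [NormedSpace ℝ E] [MeasurableSpace E]
  [BorelSpace E] [FiniteDimensional ℝ E] (μ : Measure E) [μ.IsAddHaarMeasure]
  [NormedAddCommGroup F] {L : E →ₗ[ℝ] E}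

theorem MeasureTheory.Measure.integral_comp_linearMap [NormedSpace ℝ F] (hL : L.det ≠ 0)
    (g : E → F) : ∫ x, g (L x) ∂μ = |L.det|⁻¹ • ∫ x, g x ∂μ := by
  have hemb : MeasurableEmbedding L :=
    (L.equivOfDetNeZero hL).toContinuousLinearEquiv.toHomeomorph.measurableEmbedding
  rw [← hemb.integral_map, map_linearMap_addHaar_eq_smul_addHaar μ hL, integral_smul_measure,
    ENNReal.toReal_ofReal (abs_nonneg _), abs_inv]

theorem MeasureTheory.Integrable.comp_linearMap {g : E → F} (hg : Integrable g μ)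
    (hL : L.det ≠ 0) : Integrable (g ∘ L) μ := by
  have hemb : MeasurableEmbedding L :=
    (L.equivOfDetNeZero hL).toContinuousLinearEquiv.toHomeomorph.measurableEmbedding
  rw [← hemb.integrable_map_iff, Measure.map_linearMap_addHaar_eq_smul_addHaar μ hL]
  exact hg.smul_measure ENNReal.ofReal_ne_top

end LinearChangeOfVariables

section AnisotropicScaling

variable {n : ℕ} {δ : ℝ}

def scaleILinear (n : ℕ) (δ : ℝ) : EuclideanSpace ℝ (Fin n) →ₗ[ℝ] EuclideanSpace ℝ (Fin n) :=
  Matrix.toLpLin 2 2 (Matrix.diagonal fun i : Fin n => if (i : ℕ) < n - 1 then δ⁻¹ else 1)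

theorem coe_scaleILinear : ⇑(scaleILinear n δ) = scaleI n δ := by
  ext x i
  simp only [scaleILinear, scaleI, Matrix.ofLp_toLpLin, Matrix.toLin'_apply, Matrix.mulVec_diagonal]
  split_ifs <;> simp [div_eq_inv_mul]

theorem det_scaleILinear : (scaleILinear n δ).det = δ⁻¹ ^ (n - 1) := by
  rw [scaleILinear, LinearMap.det_toLpLin, Matrix.det_diagonal]
  cases n with
  | zero => simp
  | succ m => simp [Fin.prod_univ_castSucc]

theorem det_scaleILinear_ne_zero (hδ : δ ≠ 0) : (scaleILinear n δ).det ≠ 0 := by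
  rw [det_scaleILinear]; exact pow_ne_zero _ (inv_ne_zero hδ)

theorem integral_norm_funI (hδ : 0 < δ) (g : EuclideanSpace ℝ (Fin n) → ℂ) :
    ∫ x, ‖funI n δ g x‖ = ∫ x, ‖g x‖ := by
  have hpow : 0 < δ ^ (n - 1) := by positivity
  simp only [funI, norm_smul, Real.norm_eq_abs, abs_inv, abs_of_pos hpow, ← coe_scaleILinear]
  rw [integral_const_mul, volume.integral_comp_linearMap (det_scaleILinear_ne_zero hδ.ne')
    fun x => ‖g x‖, det_scaleILinear, inv_pow, abs_of_pos (inv_pos.2 hpow), inv_inv, smul_eq_mul,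
    inv_mul_cancel_left₀ hpow.ne']

theorem MeasureTheory.Integrable.funI {g : EuclideanSpace ℝ (Fin n) → ℂ} (hg : Integrable g)
    (hδ : δ ≠ 0) : Integrable (funI n δ g) := by
  have := hg.comp_linearMap volume (det_scaleILinear_ne_zero (n := n) hδ)
  rw [coe_scaleILinear] at this
  exact this.smul (δ ^ (n - 1))⁻¹

end AnisotropicScaling

section SchwartzClass

variable {n : ℕ}

theorem mderiv_zero (f : EuclideanSpace ℝ (Fin n) → ℂ) : mderiv n (fun _ => 0) f = f := by
  simp only [mderiv, Function.iterate_zero, id_eq]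
  induction List.finRange n with
  | nil => rfl
  | cons i l ih => exact ih

theorem prod_sq_mul_norm_le_of_memS {β : Fin n → ℕ} {Υ : 𝓢(EuclideanSpace ℝ (Fin n), ℂ)}
    (hΥ : memS n (fun _ => 2) β Υ) (T : Finset (Fin n)) (x : EuclideanSpace ℝ (Fin n)) :
    (∏ i ∈ T, x i ^ 2) * ‖Υ x‖ ≤ 1 := by
  have h := hΥ (fun i => if i ∈ T then 2 else 0) (fun _ => 0)
    (Finset.sum_le_sum fun i _ => by split_ifs <;> omega) (by simp) x
  simp only [pow_ite, pow_zero, Finset.prod_ite_mem, Finset.univ_inter] at h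
  rwa [mderiv_zero, norm_smul, Real.norm_eq_abs,
    abs_of_nonneg (Finset.prod_nonneg fun i _ => sq_nonneg _)] at h

theorem norm_le_of_memS {β : Fin n → ℕ} {Υ : 𝓢(EuclideanSpace ℝ (Fin n), ℂ)}
    (hΥ : memS n (fun _ => 2) β Υ) (x : EuclideanSpace ℝ (Fin n)) :
    ‖Υ x‖ ≤ 2 ^ n * ∏ i, (1 + x i ^ 2)⁻¹ := by
  have hpos : 0 < ∏ i, (1 + x i ^ 2) := Finset.prod_pos fun i _ => by positivity
  rw [Finset.prod_inv_distrib, ← div_eq_mul_inv, le_div_iff₀ hpos, mul_comm,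
    Finset.prod_one_add, Finset.sum_mul]
  calc ∑ T ∈ Finset.univ.powerset, (∏ i ∈ T, x i ^ 2) * ‖Υ x‖
      ≤ ∑ _T ∈ (Finset.univ : Finset (Fin n)).powerset, (1 : ℝ) :=
        Finset.sum_le_sum fun T _ => prod_sq_mul_norm_le_of_memS hΥ T x
    _ = 2 ^ n := by simp

theorem integrable_prod_inv_one_add_sq (n : ℕ) :
    Integrable fun x : EuclideanSpace ℝ (Fin n) => ∏ i, (1 + x i ^ 2)⁻¹ := by
  have hpi : Integrable fun y : Fin n → ℝ => ∏ i, (1 + y i ^ 2)⁻¹ :=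
    Integrable.fintype_prod (f := fun _ t => (1 + t ^ 2)⁻¹) fun _ => integrable_inv_one_add_sq
  exact ((EuclideanSpace.volume_preserving_symm_measurableEquiv_toLp (Fin n)).integrable_comp_emb
    (MeasurableEquiv.toLp 2 (Fin n → ℝ)).symm.measurableEmbedding).2 hpi

theorem integral_norm_le_of_memS {β : Fin n → ℕ} {Υ : 𝓢(EuclideanSpace ℝ (Fin n), ℂ)}
    (hΥ : memS n (fun _ => 2) β Υ) :
    ∫ x, ‖Υ x‖ ≤ 2 ^ n * ∫ x : EuclideanSpace ℝ (Fin n), ∏ i, (1 + x i ^ 2)⁻¹ := by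
  rw [← integral_const_mul]
  exact integral_mono Υ.integrable.norm ((integrable_prod_inv_one_add_sq n).const_mul _)
    (norm_le_of_memS hΥ)

end SchwartzClass

theorem stmt_4_general
    (n : ℕ)
    (φ : SchwartzMap (EuclideanSpace ℝ (Fin n)) ℂ)
    :
    ∃ (α β : Fin n → ℕ) (C : ℝ), 0 < C ∧
      ∀ ε : ℝ, 0 < ε →
      ∀ δ : ℝ, 0 < δ → δ < 1 → 2 ≤ δ ^ (-ε) →
      ∀ Ψ : ℕ → SchwartzMap (EuclideanSpace ℝ (Fin n)) ℂ,
        (∀ ξ, 𝓕 ⇑(Ψ 0) ξ = 𝓕 ⇑φ ξ) →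
        (∀ k : ℕ, 1 ≤ k → ∀ ξ, 𝓕 ⇑(Ψ k) ξ =
          𝓕 ⇑φ ((δ ^ ((k : ℝ) * ε)) • ξ) - 𝓕 ⇑φ ((δ ^ (((k : ℝ) - 1) * ε)) • ξ)) →
      ∀ Φ : ℕ → SchwartzMap (EuclideanSpace ℝ (Fin n)) ℂ,
        (∀ ξ, 𝓕 ⇑(Φ 0) ξ = 𝓕 ⇑φ ξ) →
        (∀ k : ℕ, 1 ≤ k → ∀ ξ, 𝓕 ⇑(Φ k) ξ =
          𝓕 ⇑φ (((2 : ℝ) ^ (-(k : ℝ))) • ξ) - 𝓕 ⇑φ (((2 : ℝ) ^ (1 - (k : ℝ))) • ξ)) →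
      ∀ k : ℕ,
      ∀ Υ : SchwartzMap (EuclideanSpace ℝ (Fin n)) ℂ, memS n α β Υ →
        (∫ x : EuclideanSpace ℝ (Fin n), ‖((funI n δ (⇑(Ψ 0) + ⇑(Ψ 1)) ⋆[ContinuousLinearMap.mul ℝ ℂ, volume] funI n δ ⇑(Φ k)) ⋆[ContinuousLinearMap.mul ℝ ℂ, volume] funI n δ ⇑Υ) x‖) ≤ C := by
  set Iφ := ∫ x, ‖φ x‖
  set CΥ := 2 ^ n * ∫ x : EuclideanSpace ℝ (Fin n), ∏ i, (1 + x i ^ 2)⁻¹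
  refine ⟨fun _ => 2, fun _ => 0, Iφ * (2 * Iφ) * CΥ + 1, by positivity, ?_⟩
  intro ε _ δ hδ _ _ Ψ hΨ0 hΨk Φ hΦ0 hΦk k Υ hΥ
  have hΨ : ∫ x, ‖(⇑(Ψ 0) + ⇑(Ψ 1)) x‖ = Iφ := by
    rw [SchwartzMap.coe_add_eq_dilation (Real.rpow_pos_of_pos hδ ε) hΨ0
      (fun ξ => by simpa using hΨk 1 le_rfl ξ), integral_norm_dilation (by positivity)]
  have hΦ : ∫ x, ‖Φ k x‖ ≤ 2 * Iφ := by
    rcases k.eq_zero_or_pos with rfl | hk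
    · rw [(Φ 0).coe_eq_of_fourier_eq φ.continuous φ.integrable hΦ0]
      linarith [show 0 ≤ Iφ by positivity]
    · exact (Φ k).integral_norm_le_of_fourier_eq_sub (by positivity) (by positivity) (hΦk k hk)
  have hΨi := ((Ψ 0).integrable.add (Ψ 1).integrable).funI hδ.ne'
  have hΦi := (Φ k).integrable.funI hδ.ne'
  calc _ ≤ (∫ x, ‖(funI n δ (⇑(Ψ 0) + ⇑(Ψ 1)) ⋆[ContinuousLinearMap.mul ℝ ℂ, volume]
          funI n δ ⇑(Φ k)) x‖) * ∫ x, ‖funI n δ Υ x‖ :=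
        integral_norm_convolution_le (hΨi.integrable_convolution _ hΦi)
          (Υ.integrable.funI hδ.ne')
    _ ≤ ((∫ x, ‖funI n δ (⇑(Ψ 0) + ⇑(Ψ 1)) x‖) * ∫ x, ‖funI n δ (Φ k) x‖) *
          ∫ x, ‖funI n δ Υ x‖ := by
        gcongr; exact integral_norm_convolution_le hΨi hΦi
    _ ≤ Iφ * (2 * Iφ) * CΥ := by
        rw [integral_norm_funI hδ, integral_norm_funI hδ, integral_norm_funI hδ, hΨ]
        gcongr
        exact integral_norm_le_of_memS hΥ
    _ ≤ _ := le_add_of_nonneg_right zero_le_one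

theorem stmt_4
    (n : ℕ) (hn : 2 ≤ n)
    (φ : SchwartzMap (EuclideanSpace ℝ (Fin n)) ℂ)
    (hrad : ∀ x y : EuclideanSpace ℝ (Fin n), ‖x‖ = ‖y‖ → φ x = φ y)
    (hφ1 : ∀ ξ : EuclideanSpace ℝ (Fin n), ‖ξ‖ ≤ 1 → 𝓕 ⇑φ ξ = 1)
    (hφ0 : ∀ ξ : EuclideanSpace ℝ (Fin n), 2 ≤ ‖ξ‖ → 𝓕 ⇑φ ξ = 0)
     :
    ∃ (α β : Fin n → ℕ) (C : ℝ), 0 < C ∧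
      ∀ ε : ℝ, 0 < ε →
      ∀ δ : ℝ, 0 < δ → δ < 1 → 2 ≤ δ ^ (-ε) →
      ∀ Ψ : ℕ → SchwartzMap (EuclideanSpace ℝ (Fin n)) ℂ,
        (∀ ξ, 𝓕 ⇑(Ψ 0) ξ = 𝓕 ⇑φ ξ) →
        (∀ k : ℕ, 1 ≤ k → ∀ ξ, 𝓕 ⇑(Ψ k) ξ =
          𝓕 ⇑φ ((δ ^ ((k : ℝ) * ε)) • ξ) - 𝓕 ⇑φ ((δ ^ (((k : ℝ) - 1) * ε)) • ξ)) →
      ∀ Φ : ℕ → SchwartzMap (EuclideanSpace ℝ (Fin n)) ℂ,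
        (∀ ξ, 𝓕 ⇑(Φ 0) ξ = 𝓕 ⇑φ ξ) →
        (∀ k : ℕ, 1 ≤ k → ∀ ξ, 𝓕 ⇑(Φ k) ξ =
          𝓕 ⇑φ (((2 : ℝ) ^ (-(k : ℝ))) • ξ) - 𝓕 ⇑φ (((2 : ℝ) ^ (1 - (k : ℝ))) • ξ)) →
      ∀ k : ℕ,
      ∀ Υ : SchwartzMap (EuclideanSpace ℝ (Fin n)) ℂ, memS n α β Υ →
        (∫ x : EuclideanSpace ℝ (Fin n), ‖((funI n δ (⇑(Ψ 0) + ⇑(Ψ 1)) ⋆[ContinuousLinearMap.mul ℝ ℂ, volume] funI n δ ⇑(Φ k)) ⋆[ContinuousLinearMap.mul ℝ ℂ, volume] funI n δ ⇑Υ) x‖) ≤ C :=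
  stmt_4_general n φ
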